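/- arXiv:1811.03287 — 2 statements merged into one kernel-verified Lean document; each statement's English description precedes it below -/
import Mathlib

section
/- The UNB(r,p) pmf is strictly decreasing: for all x >= 0, p(x+1) < p(x). In particular the distribution is unimodal with mode at 0. -/
open scoped BigOperators

/-- Pochhammer (rising factorial) `(a)_n`. -/
noncomputable def poch (a : ℝ) (n : ℕ) : ℝ := ∏ i ∈ Finset.range n, (a + i)

/-- Gauss hypergeometric function `₂F₁(a,b;c;z)`. -/
noncomputable def F21 (a b c z : ℝ) : ℝ :=
  ∑' n : ℕ, poch a n * poch b n / poch c n * z ^ n / n.factorial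

/-- Pmf of the Uniform–Negative Binomial distribution `UNB(r,p)`. -/
noncomputable def unbPMF (r p : ℝ) (x : ℕ) : ℝ :=
  (1 - p) ^ x * p ^ r / (x + 1) *
    (Real.Gamma (r + x) / (Real.Gamma r * (x.factorial : ℝ))) *
    F21 1 (r + x) (2 + x) (1 - p)

/-- Pmf of the negative binomial distribution `NB(r,p)` (generalized binomial coefficient). -/
noncomputable def nbPMF (r p : ℝ) (n : ℕ) : ℝ :=
  Real.Gamma (r + n) / (Real.Gamma r * (n.factorial : ℝ)) * p ^ r * (1 - p) ^ n

lemma poch_one_eq (n : ℕ) : poch 1 n = (n.factorial : ℝ) := by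
  induction n with
  | zero => simp [poch]
  | succ n ih =>
    rw [poch, Finset.prod_range_succ, ← poch, ih, Nat.factorial_succ]
    push_cast; ring

lemma gamma_mul_poch (a : ℝ) (ha : 0 < a) (n : ℕ) :
    Real.Gamma a * poch a n = Real.Gamma (a + n) := by
  induction n with
  | zero => simp [poch]
  | succ n ih =>
    rw [poch, Finset.prod_range_succ, ← poch, ← mul_assoc, ih,
      show a + ((n : ℕ) + 1 : ℕ) = (a + n) + 1 by push_cast; ring,
      Real.Gamma_add_one (by positivity)]
    ring

lemma fact_mul_poch (x n : ℕ) :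
    (((x + 1).factorial : ℝ)) * poch (2 + x) n = (((x + 1 + n).factorial : ℝ)) := by
  induction n with
  | zero => simp [poch]
  | succ n ih =>
    rw [poch, Finset.prod_range_succ, ← poch, ← mul_assoc, ih,
      show x + 1 + (n + 1) = (x + 1 + n) + 1 from rfl, Nat.factorial_succ]
    push_cast; ring

lemma poch_pos (a : ℝ) (ha : 0 < a) (n : ℕ) : 0 < poch a n := by
  apply Finset.prod_pos
  intro i _
  positivity

lemma nbPMF_pos (r p : ℝ) (hr : 0 < r) (hp0 : 0 < p) (hp1 : p < 1) (n : ℕ) :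
    0 < nbPMF r p n := by
  unfold nbPMF
  have h1 : 0 < Real.Gamma (r + n) := Real.Gamma_pos_of_pos (by positivity)
  have h2 : 0 < Real.Gamma r := Real.Gamma_pos_of_pos hr
  have h3 : 0 < (n.factorial : ℝ) := by positivity
  have h4 : (0:ℝ) < 1 - p := by linarith
  positivity

lemma nb_step (r p : ℝ) (hr : 0 < r) (m : ℕ) :
    nbPMF r p (m + 1) / ((m:ℝ) + 1 + 1) =
      nbPMF r p m / ((m:ℝ) + 1) * ((r + m) * (1 - p) / ((m:ℝ) + 2)) := by
  unfold nbPMF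
  rw [show r + ((m : ℕ) + 1 : ℕ) = (r + m) + 1 by push_cast; ring,
    Real.Gamma_add_one (by positivity), Nat.factorial_succ]
  have h2 : Real.Gamma r ≠ 0 := (Real.Gamma_pos_of_pos hr).ne'
  have h3 : ((m.factorial : ℝ)) ≠ 0 := by positivity
  have h4 : ((m:ℝ) + 1) ≠ 0 := by positivity
  have h5 : ((m:ℝ) + 2) ≠ 0 := by positivity
  push_cast
  field_simp
  ring

lemma nb_summable (r p : ℝ) (hr : 0 < r) (hp0 : 0 < p) (hp1 : p < 1) :
    Summable (fun m : ℕ => nbPMF r p m / ((m:ℝ) + 1)) := by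
  have hq0 : (0:ℝ) < 1 - p := by linarith
  apply summable_of_ratio_norm_eventually_le (r := 1 - p / 2) (by linarith)
  rw [Filter.eventually_atTop]
  refine ⟨⌈2 * (1 - p) * r / p⌉₊, fun m hm => ?_⟩
  have hmR : 2 * (1 - p) * r / p ≤ (m : ℝ) :=
    le_trans (Nat.le_ceil _) (by exact_mod_cast hm)
  have hqr : 2 * (1 - p) * r ≤ (m : ℝ) * p := by
    rw [div_le_iff₀ hp0] at hmR; linarith
  have hfp := nbPMF_pos r p hr hp0 hp1 m
  have hf1p := nbPMF_pos r p hr hp0 hp1 (m + 1)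
  have hd1 : (0:ℝ) < (m:ℝ) + 1 := by positivity
  have hd2 : (0:ℝ) < (m:ℝ) + 2 := by positivity
  rw [Real.norm_eq_abs, Real.norm_eq_abs,
    abs_of_pos (by positivity), abs_of_pos (by positivity)]
  have := nb_step r p hr m
  push_cast
  rw [show ((m:ℝ) + 1 + 1) = (m:ℝ) + 2 by ring] at this ⊢
  rw [this, mul_comm]
  refine mul_le_mul_of_nonneg_right ?_ (div_nonneg hfp.le hd1.le)
  rw [div_le_iff₀ hd2]
  nlinarith

lemma unb_eq_tsum (r p : ℝ) (hr : 0 < r) (hp0 : 0 < p) (hp1 : p < 1) (x : ℕ) :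
    unbPMF r p x = ∑' n : ℕ, nbPMF r p (x + n) / ((x:ℝ) + n + 1) := by
  unfold unbPMF F21
  rw [← tsum_mul_left]
  apply tsum_congr
  intro n
  have hgx : 0 < Real.Gamma (r + x) := Real.Gamma_pos_of_pos (by positivity)
  have hgr : 0 < Real.Gamma r := Real.Gamma_pos_of_pos hr
  have h2 : poch (r + x) n = Real.Gamma (r + x + n) / Real.Gamma (r + x) := by
    rw [eq_div_iff hgx.ne', mul_comm]
    exact gamma_mul_poch _ (by positivity) n
  have h3 : poch (2 + x) n = (((x + 1 + n).factorial : ℝ)) / (((x + 1).factorial : ℝ)) := by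
    rw [eq_div_iff (by positivity), mul_comm]
    exact fact_mul_poch x n
  rw [poch_one_eq, h2, h3]
  unfold nbPMF
  have e0 : r + ((x + n : ℕ) : ℝ) = r + x + n := by push_cast; ring
  have e1 : (((x + 1).factorial : ℝ)) = ((x:ℝ) + 1) * (x.factorial : ℝ) := by
    rw [Nat.factorial_succ]; push_cast; ring
  have e2 : (((x + 1 + n).factorial : ℝ)) = ((x:ℝ) + n + 1) * (((x + n).factorial : ℝ)) := by
    rw [show x + 1 + n = (x + n) + 1 by ring, Nat.factorial_succ]; push_cast; ring
  rw [e0, e1, e2, pow_add]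
  have hx1 : ((x:ℝ) + 1) ≠ 0 := by positivity
  have hxn1 : ((x:ℝ) + n + 1) ≠ 0 := by positivity
  have hxf : ((x.factorial : ℝ)) ≠ 0 := by positivity
  have hnf : ((n.factorial : ℝ)) ≠ 0 := by positivity
  have hxnf : (((x + n).factorial : ℝ)) ≠ 0 := by positivity
  field_simp

theorem stmt4 (r p : ℝ) (hr : 0 < r) (hp0 : 0 < p) (hp1 : p < 1) (x : ℕ) :
    unbPMF r p (x + 1) < unbPMF r p x := by
  have hf := nb_summable r p hr hp0 hp1
  have h1 : Summable (fun n : ℕ => nbPMF r p (n + x) / (((n + x : ℕ) : ℝ) + 1)) :=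
    (summable_nat_add_iff x).2 hf
  have hsumx : Summable (fun n : ℕ => nbPMF r p (x + n) / ((x:ℝ) + n + 1)) := by
    refine h1.congr fun n => ?_
    rw [add_comm n x]; push_cast; ring_nf
  rw [unb_eq_tsum r p hr hp0 hp1 x, unb_eq_tsum r p hr hp0 hp1 (x + 1),
    Summable.tsum_eq_zero_add hsumx]
  have htail : (∑' n : ℕ, nbPMF r p (x + (n + 1)) / ((x:ℝ) + ((n + 1 : ℕ) : ℝ) + 1)) =
      ∑' n : ℕ, nbPMF r p (x + 1 + n) / (((x + 1 : ℕ) : ℝ) + n + 1) := by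
    apply tsum_congr
    intro n
    rw [show x + (n + 1) = x + 1 + n by ring]
    push_cast; ring_nf
  rw [htail]
  have h0 : 0 < nbPMF r p (x + 0) / ((x:ℝ) + 0 + 1) := by
    have := nbPMF_pos r p hr hp0 hp1 (x + 0)
    positivity
  linarith
end

section
/- As r -> infinity with q/p = lambda/r (so p = r/(r+lambda)), the UNB(r,p) pmf converges pointwise to p(x) = lambda^x e^{-lambda}/(x+1)! * 1F1(1; x+2; lambda), the pmf of the Uniform-Poisson distribution UP(lambda). -/
open scoped BigOperators

noncomputable def F11 (a c z : ℝ) : ℝ :=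
  ∑' k : ℕ, poch a k / poch c k * z ^ k / k.factorial

/-!
With `q = λ / (r + λ)` the pmf factors as `(r)ₓ qˣ / x! · p^r / (x + 1) · ₂F₁(1, r + x; 2 + x; q)`.
Each factor `(r + c) q` of a rising factorial tends to `λ`, so `(r)ₓ qˣ → λˣ` and termwise
`₂F₁(1, r + x; 2 + x; q) → ₁F₁(1; x + 2; λ)`; the termwise limit passes through the sum by
dominated convergence: for `r ≥ 1` each factor `(r + c) q` is at most `(1 + λ + c) λ / (1 + λ)`,
so the series is dominated by `₂F₁(1, 1 + λ + x; 2 + x; λ / (1 + λ))`, which converges since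
`λ / (1 + λ) < 1`. Finally `p^r = (1 + λ / r)^(-r) → e^(-λ)`.
-/

open Filter Finset Topology

lemma poch_succ (a : ℝ) (n : ℕ) : poch a (n + 1) = poch a n * (a + n) :=
  prod_range_succ _ _

lemma poch_nonneg {a : ℝ} (ha : 0 ≤ a) (n : ℕ) : 0 ≤ poch a n :=
  prod_nonneg fun i _ => by positivity

lemma poch_mul_pow (a z : ℝ) (n : ℕ) : poch a n * z ^ n = ∏ i ∈ range n, (a + i) * z := by
  rw [prod_mul_distrib, prod_const, card_range, poch]

lemma Real.Gamma_add_nat_eq_mul_poch {r : ℝ} (hr : 0 < r) (n : ℕ) :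
    Real.Gamma (r + n) = Real.Gamma r * poch r n := by
  induction n with
  | zero => simp [poch]
  | succ n ih =>
    rw [Nat.cast_succ, ← add_assoc, Real.Gamma_add_one (by positivity), ih, poch_succ]
    ring

lemma summable_of_succ_eq_mul {𝕜 : Type*} [NormedField 𝕜] [CompleteSpace 𝕜] {f c : ℕ → 𝕜}
    {L : 𝕜} (hf : ∀ n, f (n + 1) = f n * c n) (hc : Tendsto c atTop (𝓝 L)) (hL : ‖L‖ < 1) :
    Summable f := by
  obtain ⟨ρ, hLρ, hρ⟩ := exists_between hL
  refine summable_of_ratio_norm_eventually_le hρ ?_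
  filter_upwards [hc.norm.eventually (eventually_lt_nhds hLρ)] with n hn
  rw [hf, norm_mul, mul_comm]
  exact mul_le_mul_of_nonneg_right hn.le (norm_nonneg _)

lemma summable_F21_term (α b c : ℝ) {z : ℝ} (hz : |z| < 1) :
    Summable fun n : ℕ => poch α n * poch b n / poch c n * z ^ n / n.factorial := by
  refine summable_of_succ_eq_mul (c := fun n : ℕ => (α + n) / (1 + n) * ((b + n) / (c + n)) * z)
    (fun n => ?_) ?_ (by rwa [Real.norm_eq_abs])
  · rw [poch_succ, poch_succ, poch_succ, pow_succ, Nat.factorial_succ, Nat.cast_mul,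
      Nat.cast_succ]
    simp only [div_eq_mul_inv, mul_inv]
    ring
  · have hratio (a d : ℝ) : Tendsto (fun n : ℕ => (a + n) / (d + n)) atTop (𝓝 1) := by
      simpa using tendsto_add_mul_div_add_mul_atTop_nhds a d (1 : ℝ) one_ne_zero
    simpa using ((hratio α 1).mul (hratio b c)).mul_const z

lemma tendsto_add_div_add_atTop (a b : ℝ) :
    Tendsto (fun r : ℝ => (r + a) / (r + b)) atTop (𝓝 1) := by
  have h : Tendsto (fun r : ℝ => 1 + (a - b) / (r + b)) atTop (𝓝 (1 + 0)) :=
    tendsto_const_nhds.add (tendsto_const_nhds.div_atTop (tendsto_atTop_add_const_right _ b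
      tendsto_id))
  rw [add_zero] at h
  refine h.congr' ?_
  filter_upwards [eventually_gt_atTop (-b)] with r hr
  field_simp [show r + b ≠ 0 by linarith]
  ring

lemma tendsto_poch_add_mul_div_add_pow (lam a : ℝ) (n : ℕ) :
    Tendsto (fun r : ℝ => poch (r + a) n * (lam / (r + lam)) ^ n) atTop (𝓝 (lam ^ n)) := by
  have hprod : lam ^ n = ∏ _i ∈ range n, lam := by rw [prod_const, card_range]
  simp_rw [poch_mul_pow, hprod]
  refine tendsto_finsetProd _ fun i _ => ?_
  simpa using ((tendsto_add_div_add_atTop (a + i) lam).mul_const lam).congr fun r => by ring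

lemma add_mul_div_add_le {lam r c : ℝ} (hlam : 0 < lam) (hr : 1 ≤ r) (hc : 0 ≤ c) :
    (r + c) * (lam / (r + lam)) ≤ (1 + lam + c) * (lam / (1 + lam)) := by
  rw [mul_div_assoc', mul_div_assoc', div_le_div_iff₀ (by linarith) (by linarith)]
  nlinarith [mul_nonneg (mul_nonneg hlam.le (sub_nonneg.mpr hr)) hc, pow_pos hlam 2,
    pow_pos hlam 3]

lemma poch_add_mul_div_add_pow_le {lam r a : ℝ} (hlam : 0 < lam) (hr : 1 ≤ r) (ha : 0 ≤ a)
    (n : ℕ) :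
    poch (r + a) n * (lam / (r + lam)) ^ n ≤ poch (1 + lam + a) n * (lam / (1 + lam)) ^ n := by
  rw [poch_mul_pow, poch_mul_pow]
  refine prod_le_prod (fun i _ => by positivity) fun i _ => ?_
  rw [add_assoc, add_assoc (1 + lam)]
  exact add_mul_div_add_le hlam hr (by positivity)

lemma tendsto_div_add_rpow_self (lam : ℝ) :
    Tendsto (fun r : ℝ => (r / (r + lam)) ^ r) atTop (𝓝 (Real.exp (-lam))) := by
  have h := (Real.tendsto_one_add_div_rpow_exp lam).inv₀ (Real.exp_ne_zero lam)
  rw [← Real.exp_neg] at h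
  refine h.congr' ?_
  filter_upwards [eventually_gt_atTop 0, eventually_gt_atTop (-lam)] with r hr hrl
  have hbase : r / (r + lam) = (1 + lam / r)⁻¹ := by
    rw [one_add_div hr.ne', inv_div, add_comm]
  rw [hbase, Real.inv_rpow (by rw [one_add_div hr.ne']; exact div_nonneg (by linarith) hr.le)]

theorem tendsto_F21_add_div_add {α a c lam : ℝ} (hα : 0 ≤ α) (ha : 0 ≤ a) (hc : 0 < c)
    (hlam : 0 < lam) :
    Tendsto (fun r : ℝ => F21 α (r + a) c (lam / (r + lam))) atTop (𝓝 (F11 α c lam)) := by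
  set g : ℕ → ℝ := fun n => poch α n / (poch c n * n.factorial)
  have hg : ∀ n, 0 ≤ g n := fun n =>
    div_nonneg (poch_nonneg hα n) (mul_nonneg (poch_nonneg hc.le n) (Nat.cast_nonneg _))
  have hF21 : ∀ r, F21 α (r + a) c (lam / (r + lam))
      = ∑' n, g n * (poch (r + a) n * (lam / (r + lam)) ^ n) :=
    fun r => tsum_congr fun n => by ring
  have hF11 : F11 α c lam = ∑' n, g n * lam ^ n := tsum_congr fun n => by ring
  simp_rw [hF21, hF11]
  refine tendsto_tsum_of_dominated_convergence
    (bound := fun n => g n * (poch (1 + lam + a) n * (lam / (1 + lam)) ^ n)) ?_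
    (fun n => (tendsto_poch_add_mul_div_add_pow lam a n).const_mul (g n)) ?_
  · have hz : |lam / (1 + lam)| < 1 := by
      rw [abs_of_pos (by positivity), div_lt_one (by positivity)]
      linarith
    refine (summable_F21_term α (1 + lam + a) c hz).congr fun n => ?_
    ring
  · filter_upwards [eventually_ge_atTop 1] with r hr n
    have hr0 : 0 ≤ poch (r + a) n * (lam / (r + lam)) ^ n :=
      mul_nonneg (poch_nonneg (by linarith) n) (pow_nonneg (div_nonneg hlam.le (by linarith)) n)
    rw [Real.norm_eq_abs, abs_of_nonneg (mul_nonneg (hg n) hr0)]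
    exact mul_le_mul_of_nonneg_left (poch_add_mul_div_add_pow_le hlam hr ha n) (hg n)

theorem stmt12 (lam : ℝ) (hlam : 0 < lam) (x : ℕ) :
    Filter.Tendsto (fun r : ℝ => unbPMF r (r / (r + lam)) x) Filter.atTop
      (nhds (lam ^ x * Real.exp (-lam) / ((x + 1).factorial : ℝ) *
        F11 1 ((x : ℝ) + 2) lam)) := by
  have hA : Tendsto (fun r : ℝ => poch r x * (lam / (r + lam)) ^ x / x.factorial) atTop
      (𝓝 (lam ^ x / x.factorial)) := by
    simpa using (tendsto_poch_add_mul_div_add_pow lam 0 x).div_const (x.factorial : ℝ)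
  have hB : Tendsto (fun r : ℝ => (r / (r + lam)) ^ r / (x + 1)) atTop
      (𝓝 (Real.exp (-lam) / (x + 1))) :=
    (tendsto_div_add_rpow_self lam).div_const _
  have hC := tendsto_F21_add_div_add zero_le_one (Nat.cast_nonneg x)
    (show (0 : ℝ) < 2 + x by positivity) hlam
  have hlim : lam ^ x / x.factorial * (Real.exp (-lam) / (x + 1)) * F11 1 (2 + x) lam
      = lam ^ x * Real.exp (-lam) / ((x + 1).factorial : ℝ) * F11 1 ((x : ℝ) + 2) lam := by
    rw [add_comm (2 : ℝ), Nat.factorial_succ, Nat.cast_mul]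
    push_cast
    field_simp
  rw [← hlim]
  refine ((hA.mul hB).mul hC).congr' ?_
  filter_upwards [eventually_gt_atTop 0] with r hr
  rw [unbPMF, one_sub_div (by linarith), add_sub_cancel_left,
    Real.Gamma_add_nat_eq_mul_poch hr, mul_div_mul_left _ _ (Real.Gamma_pos_of_pos hr).ne']
  ring
end
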